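/- Let p : 𝔅 → G be an upper semicontinuous Banach bundle over a second countable locally compact Hausdorff space G and let ν be a generalized Radon measure on 𝔅 with total variation |ν|. Then: (1) for every f ∈ Γ_c(G;𝔅), |ν(f)| ≤ ∫_G ‖f(x)‖ d|ν|(x); and (2) if μ is any Radon measure on G such that |ν(f)| ≤ ∫_G ‖f(x)‖ dμ(x) for all f ∈ Γ_c(G;𝔅), then ∫_G φ d|ν| ≤ ∫_G φ dμ for every nonnegative φ ∈ C_c(G). -/

import Mathlib

open MeasureTheory Filter Topology Set

/-- An upper semicontinuous Banach bundle over a topological space `X`, with fibres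
`Fib x` (each a complex Banach space), total space `(x : X) × Fib x` and bundle
projection `Sigma.fst`.  The axioms are (B1)–(B4) of the paper, together with the
standing assumption that the bundle has enough sections. -/
structure USCBanachBundle (X : Type) [TopologicalSpace X] (Fib : X → Type)
    [∀ x, NormedAddCommGroup (Fib x)] [∀ x, NormedSpace ℂ (Fib x)]
    [∀ x, CompleteSpace (Fib x)] : Type where
  /-- the topology on the total space `Σ x, Fib x` -/
  topTotal : TopologicalSpace ((x : X) × Fib x)
  /-- the projection is continuous -/
  continuous_proj : @Continuous ((x : X) × Fib x) X topTotal inferInstance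
    fun b => b.1
  /-- the projection is an open map -/
  isOpenMap_proj : @IsOpenMap ((x : X) × Fib x) X topTotal inferInstance
    fun b => b.1
  /-- (B1): the norm is upper semicontinuous on the total space -/
  isOpen_norm_lt : ∀ r : ℝ, @IsOpen ((x : X) × Fib x) topTotal { b | ‖b.2‖ < r }
  /-- (B2): addition is continuous on pairs lying in a common fibre -/
  continuous_add :
    @Continuous { q : ((x : X) × Fib x) × ((x : X) × Fib x) // q.1.1 = q.2.1 }
      ((x : X) × Fib x)
      (@instTopologicalSpaceSubtype _ _
        (@instTopologicalSpaceProd _ _ topTotal topTotal))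
      topTotal
      (fun q => ⟨q.1.1.1, q.1.1.2 + cast (congrArg Fib q.2.symm) q.1.2.2⟩)
  /-- (B3): scalar multiplication is continuous -/
  continuous_smul : ∀ c : ℂ,
    @Continuous ((x : X) × Fib x) ((x : X) × Fib x) topTotal topTotal
      fun b => ⟨b.1, c • b.2⟩
  /-- (B4): if `p (a i) → x` and `‖a i‖ → 0` then `a i → 0ₓ` (stated for filters,
  which is equivalent to the statement for nets) -/
  tendsto_zero : ∀ {ι : Type} (l : Filter ι) (a : ι → (x : X) × Fib x) (x : X),
    Filter.Tendsto (fun i => (a i).1) l (nhds x) →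
    Filter.Tendsto (fun i => ‖(a i).2‖) l (nhds (0 : ℝ)) →
    Filter.Tendsto a l (@nhds _ topTotal (⟨x, 0⟩ : (x : X) × Fib x))
  /-- the bundle has enough sections -/
  enough_sections : ∀ (x : X) (v : Fib x), ∃ f : ∀ y, Fib y,
    (@Continuous X ((x : X) × Fib x) inferInstance topTotal fun y => ⟨y, f y⟩) ∧
      f x = v

namespace USCBanachBundle

variable {X : Type} [TopologicalSpace X] {Fib : X → Type}
  [∀ x, NormedAddCommGroup (Fib x)] [∀ x, NormedSpace ℂ (Fib x)]
  [∀ x, CompleteSpace (Fib x)]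

/-- `f` is a continuous (global) section of the bundle `B`. -/
def IsContSection (B : USCBanachBundle X Fib) (f : ∀ x, Fib x) : Prop :=
  @Continuous X ((x : X) × Fib x) inferInstance B.topTotal fun x => ⟨x, f x⟩

/-- membership in `Γ_c(X;𝔅)`: continuous compactly supported sections. -/
def MemGammaC (B : USCBanachBundle X Fib) (f : ∀ x, Fib x) : Prop :=
  B.IsContSection f ∧ ∃ K : Set X, IsCompact K ∧ ∀ x ∉ K, f x = 0

/-- membership in `Γ₀(X;𝔅)`: continuous sections vanishing at infinity. -/
def MemGammaZero (B : USCBanachBundle X Fib) (f : ∀ x, Fib x) : Prop :=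
  B.IsContSection f ∧ ∀ ε : ℝ, 0 < ε → IsCompact { x | ε ≤ ‖f x‖ }

/-- The Banach space `Γ₀(X;𝔅)` is separable: there is a countable set of sections in
`Γ₀` which is dense for the supremum norm. -/
def SeparableGammaZero (B : USCBanachBundle X Fib) : Prop :=
  ∃ D : Set (∀ x, Fib x), D.Countable ∧ (∀ g ∈ D, B.MemGammaZero g) ∧
    ∀ f, B.MemGammaZero f → ∀ ε : ℝ, 0 < ε → ∃ g ∈ D, ∀ x, ‖f x - g x‖ < ε

/-- uniform convergence of a sequence of sections to a section. -/
def UnifTendsto (B : USCBanachBundle X Fib) (F : ℕ → ∀ x, Fib x)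
    (f : ∀ x, Fib x) : Prop :=
  ∀ ε : ℝ, 0 < ε → ∃ N : ℕ, ∀ n ≥ N, ∀ x, ‖F n x - f x‖ < ε

/-- continuity of `ν` in the inductive limit topology: `ν fₙ → ν f` whenever `fₙ → f`
uniformly with all supports contained in a fixed compact set. -/
def ILTContinuous (B : USCBanachBundle X Fib) (ν : (∀ x, Fib x) → ℂ) : Prop :=
  ∀ (F : ℕ → ∀ x, Fib x) (f : ∀ x, Fib x) (K : Set X),
    (∀ n, B.MemGammaC (F n)) → B.MemGammaC f → IsCompact K →
    (∀ n, ∀ x ∉ K, F n x = 0) → B.UnifTendsto F f →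
    Filter.Tendsto (fun n => ν (F n)) Filter.atTop (nhds (ν f))

/-- a generalized Radon measure on the bundle `B`: a linear functional on
`Γ_c(X;𝔅)` which is continuous in the inductive limit topology. -/
def IsGRM (B : USCBanachBundle X Fib) (ν : (∀ x, Fib x) → ℂ) : Prop :=
  (∀ f g, B.MemGammaC f → B.MemGammaC g →
    ν (fun x => f x + g x) = ν f + ν g) ∧
  (∀ (c : ℂ) (f), B.MemGammaC f → ν (fun x => c • f x) = c * ν f) ∧
  B.ILTContinuous ν

/-- `μ` is the total variation `|ν|` of the generalized Radon measure `ν`: a Radon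
measure (Borel measure, finite on compacts) such that for every nonnegative
`φ ∈ C_c(X)`, `∫ φ dμ = sup { |ν f| : f ∈ Γ_c(X;𝔅), ‖f x‖ ≤ φ x for all x }`. -/
def IsTotalVariation [MeasurableSpace X] (B : USCBanachBundle X Fib)
    (ν : (∀ x, Fib x) → ℂ) (μ : Measure X) : Prop :=
  (∀ K : Set X, IsCompact K → μ K < ⊤) ∧
  ∀ φ : X → ℝ, Continuous φ → HasCompactSupport φ → (∀ x, 0 ≤ φ x) →
    ∫ x, φ x ∂μ =
      sSup { r : ℝ | ∃ f, B.MemGammaC f ∧ (∀ x, ‖f x‖ ≤ φ x) ∧ r = ‖ν f‖ }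

/-- membership in `Σ_c(X;𝔅)`: bounded sections which are pointwise limits (in the
topology of the total space) of a uniformly bounded sequence in `Γ_c(X;𝔅)` whose
supports are contained in a fixed compact set. -/
def MemSigmaC (B : USCBanachBundle X Fib) (f : ∀ x, Fib x) : Prop :=
  (∃ M : ℝ, ∀ x, ‖f x‖ ≤ M) ∧
  ∃ (F : ℕ → ∀ x, Fib x) (K : Set X) (M : ℝ),
    (∀ n, B.MemGammaC (F n)) ∧ (∀ n x, ‖F n x‖ ≤ M) ∧ IsCompact K ∧
    (∀ n, ∀ x ∉ K, F n x = 0) ∧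
    ∀ x, Filter.Tendsto (fun n => (⟨x, F n x⟩ : (x : X) × Fib x)) Filter.atTop
      (@nhds _ B.topTotal (⟨x, f x⟩ : (x : X) × Fib x))

end USCBanachBundle

/-
Part (2) is immediate from the definition of `|ν|` as a supremum. For part (1), `‖ν f‖` is at most
`∫ φ d|ν|` for every continuous compactly supported `φ ≥ ‖f‖`; this needs the supremum defining
`|ν|` to be finite, which follows from continuity of `ν` in the inductive limit topology. Since
`x ↦ ‖f x‖` is upper semicontinuous and `G` is metrizable, the Lipschitz envelopes
`x ↦ sup_y (‖f y‖ - n d(x, y))`, cut off outside the support of `f`, are such majorants, and they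
decrease pointwise to `‖f‖`; dominated convergence gives `‖ν f‖ ≤ ∫ ‖f‖ d|ν|`.
-/

section LipschitzUpperEnvelope

variable {α : Type*} [PseudoMetricSpace α] {h : α → ℝ} {M K : ℝ}

noncomputable def lipschitzUpperEnvelope (h : α → ℝ) (K : ℝ) (x : α) : ℝ :=
  ⨆ y, (h y - K * dist x y)

theorem bddAbove_range_sub_mul_dist (hM : ∀ y, h y ≤ M) (hK : 0 ≤ K) (x : α) :
    BddAbove (range fun y => h y - K * dist x y) := by
  refine ⟨M, ?_⟩
  rintro _ ⟨y, rfl⟩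
  nlinarith [hM y, dist_nonneg (x := x) (y := y)]

theorem le_lipschitzUpperEnvelope (hM : ∀ y, h y ≤ M) (hK : 0 ≤ K) (x : α) :
    h x ≤ lipschitzUpperEnvelope h K x :=
  calc h x = h x - K * dist x x := by simp
    _ ≤ _ := le_ciSup (bddAbove_range_sub_mul_dist hM hK x) x

theorem lipschitzUpperEnvelope_le (hM : ∀ y, h y ≤ M) (hK : 0 ≤ K) (x : α) :
    lipschitzUpperEnvelope h K x ≤ M :=
  have : Nonempty α := ⟨x⟩
  ciSup_le fun y => by nlinarith [hM y, dist_nonneg (x := x) (y := y)]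

theorem lipschitzWith_lipschitzUpperEnvelope (hM : ∀ y, h y ≤ M) (hK : 0 ≤ K) :
    LipschitzWith K.toNNReal (lipschitzUpperEnvelope h K) := by
  refine LipschitzWith.of_le_add_mul' K fun x x' => ?_
  have : Nonempty α := ⟨x⟩
  refine ciSup_le fun y => ?_
  calc h y - K * dist x y ≤ (h y - K * dist x' y) + K * dist x x' := by
        nlinarith [dist_triangle_left x' y x]
    _ ≤ lipschitzUpperEnvelope h K x' + K * dist x x' := by
        gcongr
        exact le_ciSup (bddAbove_range_sub_mul_dist hM hK x') y

theorem UpperSemicontinuous.tendsto_lipschitzUpperEnvelope (hh : UpperSemicontinuous h)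
    (hM : ∀ y, h y ≤ M) (x : α) :
    Tendsto (fun n : ℕ => lipschitzUpperEnvelope h n x) atTop (𝓝 (h x)) := by
  refine tendsto_order.2 ⟨fun a ha => Eventually.of_forall fun n =>
    ha.trans_le (le_lipschitzUpperEnvelope hM n.cast_nonneg x), fun b hb => ?_⟩
  obtain ⟨c, hxc, hcb⟩ := exists_between hb
  obtain ⟨δ, hδ, hδc⟩ := Metric.eventually_nhds_iff.1 (hh x c hxc)
  filter_upwards [tendsto_natCast_atTop_atTop.eventually_ge_atTop ((M - h x) / δ)] with n hn
  have : Nonempty α := ⟨x⟩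
  refine lt_of_le_of_lt (ciSup_le fun y => ?_) hcb
  -- far from `x` the penalty `n * dist x y ≥ M - h x` pushes the value below `h x < c`
  rcases lt_or_ge (dist y x) δ with hy | hy
  · nlinarith [hδc hy, dist_nonneg (x := x) (y := y), n.cast_nonneg (α := ℝ)]
  · rw [div_le_iff₀ hδ] at hn
    nlinarith [hM y, dist_comm x y, n.cast_nonneg (α := ℝ)]

end LipschitzUpperEnvelope

theorem UpperSemicontinuous.bddAbove_range_of_hasCompactSupport {α : Type*} [TopologicalSpace α]
    {h : α → ℝ} (hh : UpperSemicontinuous h) (hs : HasCompactSupport h) : BddAbove (range h) :=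
  ((hh.upperSemicontinuousOn _).bddAbove_of_isCompact hs).insert 0 |>.mono
    (range_subset_insert_image_tsupport h)

theorem UpperSemicontinuous.le_integral_of_forall_le_integral {α : Type*} [TopologicalSpace α]
    [TopologicalSpace.MetrizableSpace α] [LocallyCompactSpace α] [MeasurableSpace α]
    [OpensMeasurableSpace α] {μ : Measure α} [IsFiniteMeasureOnCompacts μ] {h : α → ℝ}
    (hh : UpperSemicontinuous h) (h0 : 0 ≤ h) (hs : HasCompactSupport h) {c : ℝ}
    (hc : ∀ φ : α → ℝ, Continuous φ → HasCompactSupport φ → 0 ≤ φ → h ≤ φ → c ≤ ∫ x, φ x ∂μ) :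
    c ≤ ∫ x, h x ∂μ := by
  let := TopologicalSpace.metrizableSpaceMetric α
  obtain ⟨M, hM⟩ := hh.bddAbove_range_of_hasCompactSupport hs
  have hM' : ∀ y, h y ≤ M := fun y => hM ⟨y, rfl⟩
  obtain ⟨ψ, hψ1, -, hψs, hψ01⟩ :=
    exists_continuous_one_zero_of_isCompact hs isClosed_empty (disjoint_empty _)
  set q : ℕ → α → ℝ := fun n x => lipschitzUpperEnvelope h n x * ψ x
  have hq_cont : ∀ n, Continuous (q n) := fun n =>
    ((lipschitzWith_lipschitzUpperEnvelope hM' n.cast_nonneg).continuous).mul ψ.continuous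
  have hψh : ∀ x, h x * ψ x = h x := fun x => by
    by_cases hx : x ∈ tsupport h
    · simp [hψ1 hx]
    · simp [image_eq_zero_of_notMem_tsupport hx]
  have hq_ge : ∀ n, h ≤ q n := fun n x => by
    rw [← hψh x]
    exact mul_le_mul_of_nonneg_right (le_lipschitzUpperEnvelope hM' n.cast_nonneg x) (hψ01 x).1
  have hlim : Tendsto (fun n => ∫ x, q n x ∂μ) atTop (𝓝 (∫ x, h x ∂μ)) := by
    refine tendsto_integral_of_dominated_convergence (fun x => M * ψ x)
      (fun n => (hq_cont n).aestronglyMeasurable)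
      ((continuous_const.mul ψ.continuous).integrable_of_hasCompactSupport hψs.mul_left)
      (fun n => ae_of_all _ fun x => ?_) (ae_of_all _ fun x => ?_)
    · rw [Real.norm_of_nonneg ((h0 x).trans (hq_ge n x))]
      exact mul_le_mul_of_nonneg_right
        (lipschitzUpperEnvelope_le hM' n.cast_nonneg x) (hψ01 x).1
    · simpa only [hψh x] using (hh.tendsto_lipschitzUpperEnvelope hM' x).mul_const (ψ x)
  exact ge_of_tendsto' hlim fun n => hc (q n) (hq_cont n) hψs.mul_left
    (h0.trans (hq_ge n)) (hq_ge n)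

namespace USCBanachBundle

section

variable {X : Type} [TopologicalSpace X] {Fib : X → Type}
  [∀ x, NormedAddCommGroup (Fib x)] [∀ x, NormedSpace ℂ (Fib x)]
  [∀ x, CompleteSpace (Fib x)] {B : USCBanachBundle X Fib} {f : ∀ x, Fib x}
  {ν : (∀ x, Fib x) → ℂ}

theorem isContSection_zero (B : USCBanachBundle X Fib) :
    B.IsContSection fun x => (0 : Fib x) := by
  rw [IsContSection, @continuous_iff_continuousAt _ _ _ B.topTotal]
  exact fun x => B.tendsto_zero (𝓝 x) (fun y => ⟨y, 0⟩) x tendsto_id (by simp)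

theorem memGammaC_zero (B : USCBanachBundle X Fib) : B.MemGammaC fun x => (0 : Fib x) :=
  ⟨B.isContSection_zero, ∅, isCompact_empty, fun _ _ => rfl⟩

theorem MemGammaC.smul (hf : B.MemGammaC f) (c : ℂ) : B.MemGammaC fun x => c • f x := by
  obtain ⟨hc, K, hK, h0⟩ := hf
  refine ⟨@Continuous.comp _ _ _ _ B.topTotal B.topTotal _ _ (B.continuous_smul c) hc, K, hK,
    fun x hx => ?_⟩
  simp [h0 x hx]

theorem IsContSection.upperSemicontinuous_norm (hf : B.IsContSection f) :
    UpperSemicontinuous fun x => ‖f x‖ :=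
  upperSemicontinuous_iff_isOpen_preimage.2 fun r =>
    @IsOpen.preimage _ _ _ B.topTotal _ hf _ (B.isOpen_norm_lt r)

theorem MemGammaC.hasCompactSupport_norm [T2Space X] (hf : B.MemGammaC f) :
    HasCompactSupport fun x => ‖f x‖ := by
  obtain ⟨-, K, hK, h0⟩ := hf
  exact HasCompactSupport.intro hK fun x hx => by simp [h0 x hx]

theorem unifTendsto_zero_of_norm_le {F : ℕ → ∀ x, Fib x} {u : ℕ → ℝ}
    (hu : Tendsto u atTop (𝓝 0)) (hF : ∀ n x, ‖F n x‖ ≤ u n) :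
    B.UnifTendsto F fun _ => 0 := fun ε hε => by
  obtain ⟨N, hN⟩ := (hu.eventually_lt_const hε).exists_forall_of_atTop
  exact ⟨N, fun n hn x => by simpa using (hF n x).trans_lt (hN n hn)⟩

theorem IsGRM.map_zero (hν : B.IsGRM ν) : ν (fun x => (0 : Fib x)) = 0 := by
  simpa using hν.2.1 0 _ B.memGammaC_zero

theorem IsGRM.exists_norm_le (hν : B.IsGRM ν) {K : Set X} (hK : IsCompact K) (C : ℝ) :
    ∃ M, ∀ f, B.MemGammaC f → (∀ x ∉ K, f x = 0) → (∀ x, ‖f x‖ ≤ C) → ‖ν f‖ ≤ M := by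
  by_contra! hunb
  -- pick `fₙ` with `‖ν fₙ‖ > (n + 1)²`: then `fₙ / (n + 1) → 0` in the inductive limit
  -- topology, while `‖ν (fₙ / (n + 1))‖ > n + 1`
  choose F hF hFK hFC hνF using fun n : ℕ => hunb (((n : ℝ) + 1) ^ 2)
  set c : ℕ → ℂ := fun n => (((n : ℝ) + 1)⁻¹ : ℝ) with hc
  have hc_norm : ∀ n, ‖c n‖ = ((n : ℝ) + 1)⁻¹ := fun n => by
    rw [hc, Complex.norm_real, Real.norm_of_nonneg (by positivity)]
  have hlim : Tendsto (fun n => ν fun x => c n • F n x) atTop (𝓝 0) := by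
    rw [← hν.map_zero]
    refine hν.2.2 _ _ K (fun n => (hF n).smul (c n)) B.memGammaC_zero hK
      (fun n x hx => by simp [hFK n x hx])
      (unifTendsto_zero_of_norm_le (u := fun n => ((n : ℝ) + 1)⁻¹ * C) ?_ fun n x => ?_)
    · simpa using (tendsto_inv_atTop_nhds_zero_nat.comp (tendsto_add_atTop_nat 1)).mul_const C
    · rw [norm_smul, hc_norm]
      exact mul_le_mul_of_nonneg_left (hFC n x) (by positivity)
  obtain ⟨n, hn⟩ := (hlim.norm.eventually_lt_const (by norm_num : ‖(0 : ℂ)‖ < 1)).exists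
  rw [hν.2.1 _ _ (hF n), norm_mul, hc_norm] at hn
  have hpos : (0 : ℝ) < (n : ℝ) + 1 := by positivity
  rw [inv_mul_lt_iff₀ hpos] at hn
  nlinarith [hνF n]

theorem IsGRM.bddAbove_norm (hν : B.IsGRM ν) {φ : X → ℝ} (hφc : Continuous φ)
    (hφs : HasCompactSupport φ) :
    BddAbove { r : ℝ | ∃ f, B.MemGammaC f ∧ (∀ x, ‖f x‖ ≤ φ x) ∧ r = ‖ν f‖ } := by
  obtain ⟨C, hC⟩ := hφc.bounded_above_of_compact_support hφs
  obtain ⟨M, hM⟩ := hν.exists_norm_le hφs C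
  refine ⟨M, ?_⟩
  rintro _ ⟨f, hf, hfφ, rfl⟩
  refine hM f hf (fun x hx => norm_le_zero_iff.1 ?_) fun x =>
    (hfφ x).trans ((le_abs_self _).trans (hC x))
  simpa [image_eq_zero_of_notMem_tsupport hx] using hfφ x

variable [MeasurableSpace X] {μν : Measure X}

theorem IsTotalVariation.norm_le_integral (hμν : B.IsTotalVariation ν μν) (hν : B.IsGRM ν)
    (hf : B.MemGammaC f) {φ : X → ℝ} (hφc : Continuous φ) (hφs : HasCompactSupport φ)
    (hφ0 : 0 ≤ φ) (hfφ : ∀ x, ‖f x‖ ≤ φ x) : ‖ν f‖ ≤ ∫ x, φ x ∂μν := by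
  rw [hμν.2 φ hφc hφs hφ0]
  exact le_csSup (hν.bddAbove_norm hφc hφs) ⟨f, hf, hfφ, rfl⟩

theorem IsTotalVariation.norm_le_integral_norm [TopologicalSpace.MetrizableSpace X]
    [LocallyCompactSpace X] [OpensMeasurableSpace X] (hμν : B.IsTotalVariation ν μν)
    (hν : B.IsGRM ν) (hf : B.MemGammaC f) : ‖ν f‖ ≤ ∫ x, ‖f x‖ ∂μν :=
  have : IsFiniteMeasureOnCompacts μν := ⟨hμν.1⟩
  hf.1.upperSemicontinuous_norm.le_integral_of_forall_le_integral (fun _ => norm_nonneg _)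
    hf.hasCompactSupport_norm fun _ hφc hφs hφ0 hfφ => hμν.norm_le_integral hν hf hφc hφs hφ0 hfφ

theorem IsTotalVariation.integral_le [OpensMeasurableSpace X] (hμν : B.IsTotalVariation ν μν)
    {μ : Measure X} (hμK : ∀ K : Set X, IsCompact K → μ K < ⊤)
    (hμ : ∀ f, B.MemGammaC f → ‖ν f‖ ≤ ∫ x, ‖f x‖ ∂μ) {φ : X → ℝ} (hφc : Continuous φ)
    (hφs : HasCompactSupport φ) (hφ0 : ∀ x, 0 ≤ φ x) : ∫ x, φ x ∂μν ≤ ∫ x, φ x ∂μ := by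
  have : IsFiniteMeasureOnCompacts μ := ⟨hμK⟩
  rw [hμν.2 φ hφc hφs hφ0]
  refine Real.sSup_le ?_ (integral_nonneg hφ0)
  rintro _ ⟨g, hg, hgφ, rfl⟩
  calc ‖ν g‖ ≤ ∫ x, ‖g x‖ ∂μ := hμ g hg
    _ ≤ ∫ x, φ x ∂μ := integral_mono_of_nonneg (ae_of_all _ fun _ => norm_nonneg _)
        (hφc.integrable_of_hasCompactSupport hφs) (ae_of_all _ hgφ)

end

end USCBanachBundle

/-- Corollary 3.4 of the paper: (1) `|ν f| ≤ ∫ ‖f x‖ d|ν|(x)` for all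
`f ∈ Γ_c(G;𝔅)`, and (2) the total variation `|ν|` is the smallest Radon measure `μ`
with `|ν f| ≤ ∫ ‖f x‖ dμ(x)` for all `f ∈ Γ_c(G;𝔅)`. -/
theorem USCBanachBundle.norm_grm_le_integral_totalVariation
    {G : Type} [TopologicalSpace G] [SecondCountableTopology G]
    [LocallyCompactSpace G] [T2Space G]
    [MeasurableSpace G] [BorelSpace G]
    {Fib : G → Type}
    [∀ x, NormedAddCommGroup (Fib x)] [∀ x, NormedSpace ℂ (Fib x)]
    [∀ x, CompleteSpace (Fib x)]
    (B : USCBanachBundle G Fib)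
    (ν : (∀ x, Fib x) → ℂ) (hν : B.IsGRM ν)
    (μν : Measure G) (hμν : B.IsTotalVariation ν μν) :
    (∀ f, B.MemGammaC f → ‖ν f‖ ≤ ∫ x, ‖f x‖ ∂μν) ∧
    (∀ μ : Measure G, (∀ K : Set G, IsCompact K → μ K < ⊤) →
      (∀ f, B.MemGammaC f → ‖ν f‖ ≤ ∫ x, ‖f x‖ ∂μ) →
      ∀ φ : G → ℝ, Continuous φ → HasCompactSupport φ → (∀ x, 0 ≤ φ x) →
        ∫ x, φ x ∂μν ≤ ∫ x, φ x ∂μ) :=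
  ⟨fun _ hf => hμν.norm_le_integral_norm hν hf, fun _ hμK hμ _ hφc hφs hφ0 =>
    hμν.integral_le hμK hμ hφc hφs hφ0⟩
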